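/- The sum of P_r(Y) over all subcomplexes Y of Δ_n^{(r)} equals 1; that is, P_r is a probability function on the set of all subcomplexes of the r-skeleton of the (n−1)-dimensional simplex. -/

import Mathlib

open Finset Filter

/-- A subcomplex of the `r`-skeleton of the simplex on vertex set `Fin n`:
a collection of nonempty faces of cardinality at most `r+1`, closed under
passing to nonempty subsets. -/
def IsComplex (n r : ℕ) (Y : Finset (Finset (Fin n))) : Prop :=
  (∀ σ ∈ Y, σ.Nonempty ∧ σ.card ≤ r + 1) ∧
    ∀ σ ∈ Y, ∀ τ ⊆ σ, τ.Nonempty → τ ∈ Y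

/-- `fCount Y i` = number of faces of `Y` of cardinality `i+1` (i.e. of dimension `i`). -/
def fCount {n : ℕ} (Y : Finset (Finset (Fin n))) (i : ℕ) : ℕ :=
  (Y.filter fun σ => σ.card = i + 1).card

/-- `eCount Y i` = number of external `i`-faces of `Y`: sets `σ` of cardinality `i+1`
that are not faces of `Y` but all of whose (nonempty) `i`-element subsets are faces of `Y`. -/
def eCount {n : ℕ} (Y : Finset (Finset (Fin n))) (i : ℕ) : ℕ :=
  ((univ : Finset (Finset (Fin n))).filter fun σ =>
    σ.card = i + 1 ∧ σ ∉ Y ∧ ∀ τ ⊆ σ, τ.card = i → τ.Nonempty → τ ∈ Y).card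

/-- The weight `P_r(Y) = ∏_{i=0}^r p_i^{f_i(Y)} (1-p_i)^{e_i(Y)}`. -/
noncomputable def weight (n r : ℕ) (p : ℕ → ℝ) (Y : Finset (Finset (Fin n))) : ℝ :=
  ∏ i ∈ Finset.range (r + 1), p i ^ fCount Y i * (1 - p i) ^ eCount Y i

open scoped Classical in
/-- The finite set of all subcomplexes of `Δ_n^{(r)}`. -/
noncomputable def complexes (n r : ℕ) : Finset (Finset (Finset (Fin n))) :=
  (univ : Finset (Finset (Finset (Fin n)))).filter (IsComplex n r)

/-- A finite abstract simplicial complex on a vertex type `V`. -/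
def IsSimpComplex {V : Type*} [DecidableEq V] (S : Finset (Finset V)) : Prop :=
  S.Nonempty ∧ (∀ σ ∈ S, σ.Nonempty) ∧ ∀ σ ∈ S, ∀ τ ⊆ σ, τ.Nonempty → τ ∈ S

/-- `fS S i` = number of faces of `S` of cardinality `i+1`. -/
def fS {V : Type*} [DecidableEq V] (S : Finset (Finset V)) (i : ℕ) : ℕ :=
  (S.filter fun σ => σ.card = i + 1).card

/-- The degree of a face `σ` in `S`: the number of faces of one higher dimension containing it. -/
def degFace {V : Type*} [DecidableEq V] (S : Finset (Finset V)) (σ : Finset V) : ℕ :=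
  (S.filter fun τ => τ.card = σ.card + 1 ∧ σ ⊆ τ).card

open scoped Classical

/-- Potential `k`-faces over `Y`: sets of cardinality `k+1` all of whose nonempty
`k`-element subsets lie in `Y`. -/
noncomputable def potential {n : ℕ} (Y : Finset (Finset (Fin n))) (k : ℕ) :
    Finset (Finset (Fin n)) :=
  univ.filter fun σ => σ.card = k + 1 ∧ ∀ τ ⊆ σ, τ.card = k → τ.Nonempty → τ ∈ Y

/-- Complexes whose faces have cardinality at most `k`. -/
noncomputable def complexes' (n k : ℕ) : Finset (Finset (Finset (Fin n))) :=
  univ.filter fun Y =>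
    (∀ σ ∈ Y, σ.Nonempty ∧ σ.card ≤ k) ∧ ∀ σ ∈ Y, ∀ τ ⊆ σ, τ.Nonempty → τ ∈ Y

lemma mem_complexes' {n k : ℕ} {Y : Finset (Finset (Fin n))} :
    Y ∈ complexes' n k ↔
      (∀ σ ∈ Y, σ.Nonempty ∧ σ.card ≤ k) ∧ ∀ σ ∈ Y, ∀ τ ⊆ σ, τ.Nonempty → τ ∈ Y := by
  simp [complexes']

lemma mem_potential {n k : ℕ} {Y : Finset (Finset (Fin n))} {σ : Finset (Fin n)} :
    σ ∈ potential Y k ↔ σ.card = k + 1 ∧ ∀ τ ⊆ σ, τ.card = k → τ.Nonempty → τ ∈ Y := by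
  simp [potential]

lemma union_mem_complexes' {n k : ℕ} {Y' T : Finset (Finset (Fin n))}
    (hY : Y' ∈ complexes' n k) (hT : T ⊆ potential Y' k) :
    Y' ∪ T ∈ complexes' n (k + 1) := by
  rw [mem_complexes'] at hY ⊢
  obtain ⟨h1, h2⟩ := hY
  constructor
  · intro σ hσ
    rcases mem_union.1 hσ with h | h
    · exact ⟨(h1 σ h).1, (h1 σ h).2.trans (Nat.le_succ k)⟩
    · have hc := (mem_potential.1 (hT h)).1
      exact ⟨Finset.card_pos.1 (by omega), by omega⟩
  · intro σ hσ τ hτ hne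
    rcases mem_union.1 hσ with h | h
    · exact mem_union_left _ (h2 σ h τ hτ hne)
    · obtain ⟨hc, hall⟩ := mem_potential.1 (hT h)
      by_cases heq : τ.card = k + 1
      · have : τ = σ := Finset.eq_of_subset_of_card_le hτ (by omega)
        subst this; exact mem_union_right _ h
      · have hle : τ.card ≤ k := by
          have := Finset.card_le_card hτ; omega
        have h1τ : 1 ≤ τ.card := Finset.card_pos.2 hne
        obtain ⟨u, huτ, huσ, huc⟩ := Finset.exists_subsuperset_card_eq hτ hle (by omega)
        have hu : u ∈ Y' := hall u huσ huc (Finset.card_pos.1 (by omega))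
        exact mem_union_left _ (h2 u hu τ huτ hne)

lemma filter_le_mem {n k : ℕ} {Y : Finset (Finset (Fin n))} (hY : Y ∈ complexes' n (k + 1)) :
    Y.filter (fun σ => σ.card ≤ k) ∈ complexes' n k := by
  rw [mem_complexes'] at hY ⊢
  obtain ⟨h1, h2⟩ := hY
  refine ⟨fun σ hσ => ?_, fun σ hσ τ hτ hne => ?_⟩
  · rw [mem_filter] at hσ; exact ⟨(h1 σ hσ.1).1, hσ.2⟩
  · rw [mem_filter] at hσ ⊢
    exact ⟨h2 σ hσ.1 τ hτ hne, le_trans (Finset.card_le_card hτ) hσ.2⟩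

lemma filter_eq_mem {n k : ℕ} {Y : Finset (Finset (Fin n))} (hY : Y ∈ complexes' n (k + 1)) :
    Y.filter (fun σ => σ.card = k + 1) ⊆ potential (Y.filter (fun σ => σ.card ≤ k)) k := by
  intro σ hσ
  rw [mem_filter] at hσ
  rw [mem_potential]
  obtain ⟨h1, h2⟩ := mem_complexes'.1 hY
  refine ⟨hσ.2, fun τ hτ hc hne => ?_⟩
  rw [mem_filter]
  exact ⟨h2 σ hσ.1 τ hτ hne, by omega⟩

lemma union_filters {n k : ℕ} {Y : Finset (Finset (Fin n))} (hY : Y ∈ complexes' n (k + 1)) :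
    Y.filter (fun σ => σ.card ≤ k) ∪ Y.filter (fun σ => σ.card = k + 1) = Y := by
  obtain ⟨h1, _⟩ := mem_complexes'.1 hY
  ext σ
  simp only [mem_union, mem_filter]
  constructor
  · rintro (⟨h, _⟩ | ⟨h, _⟩) <;> exact h
  · intro h
    have := (h1 σ h).2
    by_cases hc : σ.card ≤ k
    · exact Or.inl ⟨h, hc⟩
    · exact Or.inr ⟨h, by omega⟩

lemma filter_union_le {n k : ℕ} {Y' T : Finset (Finset (Fin n))}
    (hY : Y' ∈ complexes' n k) (hT : T ⊆ potential Y' k) :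
    (Y' ∪ T).filter (fun σ => σ.card ≤ k) = Y' := by
  obtain ⟨h1, _⟩ := mem_complexes'.1 hY
  ext σ
  simp only [mem_filter, mem_union]
  constructor
  · rintro ⟨h | h, hc⟩
    · exact h
    · have := (mem_potential.1 (hT h)).1; omega
  · exact fun h => ⟨Or.inl h, (h1 σ h).2⟩

lemma filter_union_eq {n k : ℕ} {Y' T : Finset (Finset (Fin n))}
    (hY : Y' ∈ complexes' n k) (hT : T ⊆ potential Y' k) :
    (Y' ∪ T).filter (fun σ => σ.card = k + 1) = T := by
  obtain ⟨h1, _⟩ := mem_complexes'.1 hY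
  ext σ
  simp only [mem_filter, mem_union]
  constructor
  · rintro ⟨h | h, hc⟩
    · have := (h1 σ h).2; omega
    · exact h
  · exact fun h => ⟨Or.inr h, (mem_potential.1 (hT h)).1⟩

lemma fCount_union_lt {n k i : ℕ} (hik : i < k) {Y' T : Finset (Finset (Fin n))}
    (hT : T ⊆ potential Y' k) :
    fCount (Y' ∪ T) i = fCount Y' i := by
  unfold fCount
  congr 1
  ext σ
  simp only [mem_filter, mem_union]
  constructor
  · rintro ⟨h | h, hc⟩
    · exact ⟨h, hc⟩
    · have := (mem_potential.1 (hT h)).1; omega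
  · exact fun h => ⟨Or.inl h.1, h.2⟩

lemma fCount_union_top {n k : ℕ} {Y' T : Finset (Finset (Fin n))}
    (hY : Y' ∈ complexes' n k) (hT : T ⊆ potential Y' k) :
    fCount (Y' ∪ T) k = T.card := by
  obtain ⟨h1, _⟩ := mem_complexes'.1 hY
  unfold fCount
  congr 1
  ext σ
  simp only [mem_filter, mem_union]
  constructor
  · rintro ⟨h | h, hc⟩
    · have := (h1 σ h).2; omega
    · exact h
  · exact fun h => ⟨Or.inr h, (mem_potential.1 (hT h)).1⟩

lemma eCount_union_lt {n k i : ℕ} (hik : i < k) {Y' T : Finset (Finset (Fin n))}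
    (hT : T ⊆ potential Y' k) :
    eCount (Y' ∪ T) i = eCount Y' i := by
  unfold eCount
  congr 1
  ext σ
  simp only [mem_filter, mem_univ, true_and, mem_union]
  constructor
  · rintro ⟨hc, hn, hall⟩
    refine ⟨hc, fun h => hn (Or.inl h), fun τ hτ hτc hτn => ?_⟩
    rcases hall τ hτ hτc hτn with h | h
    · exact h
    · have := (mem_potential.1 (hT h)).1; omega
  · rintro ⟨hc, hn, hall⟩
    refine ⟨hc, ?_, fun τ hτ hτc hτn => Or.inl (hall τ hτ hτc hτn)⟩
    rintro (h | h)
    · exact hn h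
    · have := (mem_potential.1 (hT h)).1; omega

lemma eCount_union_top {n k : ℕ} {Y' T : Finset (Finset (Fin n))}
    (hY : Y' ∈ complexes' n k) (hT : T ⊆ potential Y' k) :
    eCount (Y' ∪ T) k = (potential Y' k).card - T.card := by
  obtain ⟨h1, _⟩ := mem_complexes'.1 hY
  have key : eCount (Y' ∪ T) k = ((potential Y' k) \ T).card := by
    unfold eCount
    congr 1
    ext σ
    rw [Finset.mem_sdiff]
    simp only [mem_filter, mem_univ, true_and, mem_sdiff, mem_potential, mem_union]
    constructor
    · rintro ⟨hc, hn, hall⟩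
      refine ⟨⟨hc, fun τ hτ hτc hτn => ?_⟩, fun h => hn (Or.inr h)⟩
      rcases hall τ hτ hτc hτn with h | h
      · exact h
      · have := (mem_potential.1 (hT h)).1; omega
    · rintro ⟨⟨hc, hall⟩, hnT⟩
      refine ⟨hc, ?_, fun τ hτ hτc hτn => Or.inl (hall τ hτ hτc hτn)⟩
      rintro (h | h)
      · have := (h1 σ h).2; omega
      · exact hnT h
  rw [key, Finset.card_sdiff_of_subset hT]

lemma main_sum (n : ℕ) (p : ℕ → ℝ) (k : ℕ) :
    ∑ Y ∈ complexes' n k,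
      ∏ i ∈ Finset.range k, p i ^ fCount Y i * (1 - p i) ^ eCount Y i = 1 := by
  induction k with
  | zero =>
    have h0 : complexes' n 0 = {∅} := by
      ext Y
      simp only [mem_complexes', Finset.mem_singleton]
      constructor
      · rintro ⟨h1, _⟩
        ext σ
        simp only [Finset.notMem_empty, iff_false]
        intro hσ
        have h2 := h1 σ hσ
        have := Finset.card_pos.2 h2.1
        omega
      · rintro rfl
        exact ⟨by simp, by simp⟩
    simp [h0]
  | succ k ih =>
    have hstep : ∑ Y ∈ complexes' n (k + 1),
        ∏ i ∈ Finset.range (k + 1), p i ^ fCount Y i * (1 - p i) ^ eCount Y i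
        = ∑ Y' ∈ complexes' n k, ∑ T ∈ (potential Y' k).powerset,
            ∏ i ∈ Finset.range (k + 1),
              p i ^ fCount (Y' ∪ T) i * (1 - p i) ^ eCount (Y' ∪ T) i := by
      rw [Finset.sum_sigma']
      refine Finset.sum_bij'
        (fun Y _ => (⟨Y.filter (fun σ => σ.card ≤ k), Y.filter (fun σ => σ.card = k + 1)⟩ :
          Σ _ : Finset (Finset (Fin n)), Finset (Finset (Fin n))))
        (fun a _ => a.1 ∪ a.2) ?_ ?_ ?_ ?_ ?_
      · intro Y hY
        rw [Finset.mem_sigma]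
        exact ⟨filter_le_mem hY, Finset.mem_powerset.2 (filter_eq_mem hY)⟩
      · rintro ⟨Y', T⟩ ha
        rw [Finset.mem_sigma, Finset.mem_powerset] at ha
        exact union_mem_complexes' ha.1 ha.2
      · intro Y hY
        exact union_filters hY
      · rintro ⟨Y', T⟩ ha
        rw [Finset.mem_sigma, Finset.mem_powerset] at ha
        simp only
        congr 1
        · exact filter_union_le ha.1 ha.2
        · exact filter_union_eq ha.1 ha.2
      · intro Y hY
        rw [union_filters hY]
    rw [hstep]
    have inner : ∀ Y' ∈ complexes' n k,
        ∑ T ∈ (potential Y' k).powerset,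
          ∏ i ∈ Finset.range (k + 1),
            p i ^ fCount (Y' ∪ T) i * (1 - p i) ^ eCount (Y' ∪ T) i
        = ∏ i ∈ Finset.range k, p i ^ fCount Y' i * (1 - p i) ^ eCount Y' i := by
      intro Y' hY'
      have hterm : ∀ T ∈ (potential Y' k).powerset,
          (∏ i ∈ Finset.range (k + 1),
            p i ^ fCount (Y' ∪ T) i * (1 - p i) ^ eCount (Y' ∪ T) i)
          = (∏ i ∈ Finset.range k, p i ^ fCount Y' i * (1 - p i) ^ eCount Y' i) *
              (p k ^ T.card * (1 - p k) ^ ((potential Y' k).card - T.card)) := by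
        intro T hT
        rw [Finset.mem_powerset] at hT
        rw [Finset.prod_range_succ, fCount_union_top hY' hT, eCount_union_top hY' hT]
        congr 1
        refine Finset.prod_congr rfl fun i hi => ?_
        rw [Finset.mem_range] at hi
        rw [fCount_union_lt hi hT, eCount_union_lt hi hT]
      rw [Finset.sum_congr rfl hterm, ← Finset.mul_sum]
      have hb : ∑ T ∈ (potential Y' k).powerset,
          p k ^ T.card * (1 - p k) ^ ((potential Y' k).card - T.card) = 1 := by
        have h1 : ∀ T ∈ (potential Y' k).powerset,
            p k ^ T.card * (1 - p k) ^ ((potential Y' k).card - T.card)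
            = (∏ _i ∈ T, p k) * ∏ _i ∈ potential Y' k \ T, (1 - p k) := by
          intro T hT
          rw [Finset.mem_powerset] at hT
          rw [Finset.prod_const, Finset.prod_const, Finset.card_sdiff_of_subset hT]
        rw [Finset.sum_congr rfl h1, ← Finset.prod_add]
        have hone : p k + (1 - p k) = 1 := by ring
        simp only [hone, Finset.prod_const_one]
      rw [hb, mul_one]
    rw [Finset.sum_congr rfl inner]
    exact ih

/-- `P_r` is a probability function. -/
theorem stmt1 (n r : ℕ) (hn : 1 ≤ n) (p : ℕ → ℝ)
    (hp : ∀ i, i ≤ r → 0 ≤ p i ∧ p i ≤ 1) :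
    ∑ Y ∈ complexes n r, weight n r p Y = 1 := by
  have hc : complexes n r = complexes' n (r + 1) := by
    ext Y
    simp [complexes, complexes', IsComplex]
  rw [hc]
  simpa only [weight] using main_sum n p (r + 1)
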